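/- arXiv:2501.11486 — 5 statements merged into one kernel-verified Lean document; each statement's English description precedes it below -/
import Mathlib

section
/- For a finite group G with a solvable normal subgroup N and any x ∈ G, the cardinality of Sol_G(x) is divisible by |N|. -/
/-!
If `⟨x, y⟩` is solvable and `n ∈ N`, then `⟨x, y n⟩ ≤ ⟨x, y⟩ ⊔ N`, which is solvable as an
extension of the solvable group `N` by a quotient of `⟨x, y⟩`. Hence `Sol_G(x)` is a union of
left cosets of `N`, and its cardinality is a multiple of `|N|`.
-/

def solubilizer (G : Type*) [Group G] (x : G) : Set G :=
  {y | IsSolvable ↥(Subgroup.closure {x, y})}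

open scoped Pointwise

namespace Subgroup

variable {G : Type*} [Group G]

theorem isSolvable_of_le {H K : Subgroup G} (hHK : H ≤ K) [Group.IsSolvable K] :
    Group.IsSolvable H :=
  Group.isSolvable_of_isSolvable_injective (inclusion_injective hHK)

theorem isSolvable_sup_of_normal {H N : Subgroup G} [N.Normal] [Group.IsSolvable H]
    [Group.IsSolvable N] : Group.IsSolvable ↥(H ⊔ N) := by
  have : Group.IsSolvable (N.subgroupOf (H ⊔ N)) :=
    Group.isSolvable_of_isSolvable_injective
      (f := (subgroupOfEquivOfLe le_sup_right).toMonoidHom) (MulEquiv.injective _)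
  have : Group.IsSolvable (↥(H ⊔ N) ⧸ N.subgroupOf (H ⊔ N)) :=
    Group.isSolvable_of_surjective
      (f := (QuotientGroup.quotientInfEquivProdNormalQuotient H N).toMonoidHom)
      (MulEquiv.surjective _)
  exact (Group.isSolvable_iff_subgroup_quotient _).2 ⟨‹_›, ‹_›⟩

end Subgroup

section Solubilizer

variable {G : Type*} [Group G]

theorem mul_mem_solubilizer {N : Subgroup G} [N.Normal] [Group.IsSolvable N] {x y n : G}
    (hy : y ∈ solubilizer G x) (hn : n ∈ N) : y * n ∈ solubilizer G x := by
  have : Group.IsSolvable (Subgroup.closure {x, y}) := hy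
  have hx : x ∈ Subgroup.closure {x, y} := Subgroup.subset_closure (by simp)
  have hy : y ∈ Subgroup.closure {x, y} := Subgroup.subset_closure (by simp)
  have hle : Subgroup.closure {x, y * n} ≤ Subgroup.closure {x, y} ⊔ N := by
    rw [Subgroup.closure_le, Set.insert_subset_iff, Set.singleton_subset_iff]
    exact ⟨Subgroup.mem_sup_left hx,
      mul_mem (Subgroup.mem_sup_left hy) (Subgroup.mem_sup_right hn)⟩
  have := Subgroup.isSolvable_sup_of_normal (H := Subgroup.closure {x, y}) (N := N)
  exact Subgroup.isSolvable_of_le hle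

theorem solubilizer_mul_normal (N : Subgroup G) [N.Normal] [Group.IsSolvable N] (x : G) :
    solubilizer G x * N = solubilizer G x := by
  refine subset_antisymm ?_ fun y hy ↦ ⟨y, hy, 1, N.one_mem, mul_one y⟩
  rintro _ ⟨y, hy, n, hn, rfl⟩
  exact mul_mem_solubilizer hy hn

end Solubilizer

theorem stmt4_general {G : Type*} [Group G] (N : Subgroup G) [N.Normal]
    (hN : IsSolvable ↥N) (x : G) :
    Nat.card N ∣ Nat.card (solubilizer G x) := by
  have : Group.IsSolvable N := hN
  rw [← solubilizer_mul_normal N x, Subgroup.card_mul_eq_card_subgroup_mul_card_quotient]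
  exact dvd_mul_right _ _

theorem stmt4 {G : Type*} [Group G] [Finite G] (N : Subgroup G) [N.Normal]
    (hN : IsSolvable ↥N) (x : G) :
    Nat.card N ∣ Nat.card (solubilizer G x) :=
  stmt4_general N hN x
end

section
/- For a finite group G with a normal subgroup N and x ∈ G, the solubilizer of the coset xN in G/N equals the image of Sol_G(x) under the quotient map, provided N is solvable. -/
/-!
Images of solvable groups are solvable, so the image of `Sol_G(x)` lies in `Sol_{G/N}(xN)`.
Conversely, if `⟨xN, yN⟩` is solvable then so is its full preimage in `G`, an extension of it
by the solvable group `N`; this preimage contains `⟨x, y⟩`, whence `y ∈ Sol_G(x)`.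
-/

namespace Subgroup

variable {G H : Type*} [Group G] [Group H]

theorem isSolvable_map (K : Subgroup G) [Group.IsSolvable K] (f : G →* H) :
    Group.IsSolvable (K.map f) :=
  Group.isSolvable_of_surjective (f.subgroupMap_surjective K)

theorem isSolvable_comap {f : G →* H} (hf : Group.IsSolvable f.ker) (K : Subgroup H)
    [Group.IsSolvable K] :
    Group.IsSolvable (K.comap f) :=
  Group.isSolvable_of_ker_le_range (inclusion (f.ker_le_comap K)) (f.subgroupComap K)
    fun k hk => ⟨⟨k, congrArg Subtype.val hk⟩, rfl⟩

theorem map_closure_pair (f : G →* H) (x y : G) :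
    (closure {x, y}).map f = closure {f x, f y} := by
  rw [MonoidHom.map_closure, Set.image_pair]

theorem closure_pair_le_comap_closure_pair (f : G →* H) (x y : G) :
    closure {x, y} ≤ (closure {f x, f y}).comap f := by
  rw [← map_le_iff_le_comap, map_closure_pair]

end Subgroup

section solubilizer

open Subgroup

variable {G H : Type*} [Group G] [Group H]

theorem image_solubilizer_subset (f : G →* H) (x : G) :
    f '' solubilizer G x ⊆ solubilizer H (f x) := by
  rintro _ ⟨y, hy, rfl⟩
  have : Group.IsSolvable (closure {x, y}) := hy
  change Group.IsSolvable (closure {f x, f y})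
  rw [← map_closure_pair]
  exact isSolvable_map _ f

theorem preimage_solubilizer_subset {f : G →* H} (hf : Group.IsSolvable f.ker) (x : G) :
    f ⁻¹' solubilizer H (f x) ⊆ solubilizer G x := by
  intro y hy
  have : Group.IsSolvable (closure {f x, f y}) := hy
  have : Group.IsSolvable ((closure {f x, f y}).comap f) := isSolvable_comap hf _
  exact Group.isSolvable_of_isSolvable_injective
    (inclusion_injective (closure_pair_le_comap_closure_pair f x y))

theorem solubilizer_eq_image_of_surjective {f : G →* H} (hsurj : Function.Surjective f)
    (hf : Group.IsSolvable f.ker) (x : G) :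
    solubilizer H (f x) = f '' solubilizer G x :=
  subset_antisymm
    (fun z hz => by
      obtain ⟨y, rfl⟩ := hsurj z
      exact ⟨y, preimage_solubilizer_subset hf x hz, rfl⟩)
    (image_solubilizer_subset f x)

end solubilizer

theorem stmt5_general {G : Type*} [Group G] (N : Subgroup G) [N.Normal]
    (hN : IsSolvable ↥N) (x : G) :
    solubilizer (G ⧸ N) (QuotientGroup.mk x) =
      QuotientGroup.mk '' solubilizer G x :=
  solubilizer_eq_image_of_surjective (f := QuotientGroup.mk' N) (QuotientGroup.mk'_surjective N)
    (by rwa [QuotientGroup.ker_mk']) x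

theorem stmt5 {G : Type*} [Group G] [Finite G] (N : Subgroup G) [N.Normal]
    (hN : IsSolvable ↥N) (x : G) :
    solubilizer (G ⧸ N) (QuotientGroup.mk x) =
      QuotientGroup.mk '' solubilizer G x :=
  stmt5_general N hN x
end

section
/- If G is a finite group, x ∈ G, and |Sol_G(x)| = p for a prime p, then G has order p. -/
open Subgroup

section Solvable

variable {G : Type*} [Group G]

theorem Subgroup.isSolvable_of_le_s6 {H K : Subgroup G} [Group.IsSolvable K] (h : H ≤ K) :
    Group.IsSolvable H :=
  Group.isSolvable_of_isSolvable_injective (inclusion_injective h)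

instance Subgroup.isSolvable_zpowers (g : G) : Group.IsSolvable (zpowers g) :=
  Group.isSolvable_of_comm Std.Commutative.comm

theorem Subgroup.isSolvable_sup_of_le_normalizer {A H : Subgroup G} [Group.IsSolvable A]
    [Group.IsSolvable H] (hA : A ≤ normalizer H) : Group.IsSolvable ↥(A ⊔ H) := by
  have : (H.subgroupOf (A ⊔ H)).Normal := normal_subgroupOf_sup_of_le_normalizer hA
  have : Group.IsSolvable (H.subgroupOf (A ⊔ H)) :=
    Group.isSolvable_of_isSolvable_injective
      (f := (subgroupOfEquivOfLe le_sup_right).toMonoidHom) (MulEquiv.injective _)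
  have hsurj : Function.Surjective ((QuotientGroup.mk' (H.subgroupOf (A ⊔ H))).comp
      (inclusion le_sup_left : A →* ↥(A ⊔ H))) := by
    rintro ⟨⟨l, hl⟩⟩
    rw [← SetLike.mem_coe, coe_mul_of_left_le_normalizer_right A H hA] at hl
    obtain ⟨a, ha, h, hh, rfl⟩ := hl
    refine ⟨⟨a, ha⟩, QuotientGroup.eq.mpr ?_⟩
    simpa [mem_subgroupOf] using hh
  have : Group.IsSolvable (↥(A ⊔ H) ⧸ H.subgroupOf (A ⊔ H)) :=
    Group.isSolvable_of_surjective hsurj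
  exact (Group.isSolvable_iff_subgroup_quotient (H.subgroupOf (A ⊔ H))).mpr ⟨‹_›, ‹_›⟩

end Solvable

section Solubilizer

variable {G : Type*} [Group G] {x y : G}

theorem mem_solubilizer_iff : y ∈ solubilizer G x ↔ Group.IsSolvable (closure {x, y}) :=
  Iff.rfl

theorem mem_solubilizer_comm : y ∈ solubilizer G x ↔ x ∈ solubilizer G y := by
  rw [mem_solubilizer_iff, mem_solubilizer_iff, Set.pair_comm]

theorem mem_solubilizer_of_mem {H : Subgroup G} [Group.IsSolvable H] (hx : x ∈ H) (hy : y ∈ H) :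
    y ∈ solubilizer G x :=
  isSolvable_of_le_s6 ((closure_le _).mpr (Set.insert_subset hx (Set.singleton_subset_iff.mpr hy)))

theorem mem_solubilizer_of_mem_normalizer {H : Subgroup G} [Group.IsSolvable H] (hx : x ∈ H)
    (hy : y ∈ normalizer H) : y ∈ solubilizer G x :=
  have := isSolvable_sup_of_le_normalizer (zpowers_le.mpr hy)
  mem_solubilizer_of_mem (mem_sup_right hx) (mem_sup_left (mem_zpowers y))

@[simp]
theorem solubilizer_one : solubilizer G 1 = Set.univ :=
  Set.eq_univ_of_forall fun y => mem_solubilizer_of_mem (one_mem (zpowers y)) (mem_zpowers y)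

theorem zpowers_subset_solubilizer (x : G) : (zpowers x : Set G) ⊆ solubilizer G x :=
  fun _ => mem_solubilizer_of_mem (mem_zpowers x)

theorem mul_mem_solubilizer_s6 {h : G} (hy : y ∈ solubilizer G x) (hh : h ∈ zpowers x) :
    y * h ∈ solubilizer G x := by
  have := mem_solubilizer_iff.mp hy
  have hx : x ∈ closure {x, y} := subset_closure (Set.mem_insert x _)
  have hyh : y * h ∈ closure {x, y} :=
    mul_mem (subset_closure (Set.mem_insert_of_mem x rfl)) (zpowers_le.mpr hx hh)
  exact mem_solubilizer_of_mem hx hyh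

theorem orderOf_dvd_card_solubilizer (x : G) : orderOf x ∣ Nat.card (solubilizer G x) := by
  have hcosets : (QuotientGroup.mk : G → G ⧸ zpowers x) ⁻¹'
      (QuotientGroup.mk '' solubilizer G x) = solubilizer G x := by
    refine Set.Subset.antisymm ?_ (Set.subset_preimage_image _ _)
    rintro z ⟨y, hy, hyz⟩
    simpa using mul_mem_solubilizer_s6 hy (QuotientGroup.eq.mp hyz)
  rw [← hcosets, QuotientGroup.card_preimage_mk, Nat.card_zpowers]
  exact dvd_mul_right _ _

end Solubilizer

section NormalComplement

variable {G : Type*} [Group G] {p q : ℕ} [Fact p.Prime] [Fact q.Prime]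

theorem IsPGroup.le_of_index_eq_prime (hpq : p ≠ q) {K : Subgroup G} [K.Normal]
    (hK : K.index = p) {Q : Subgroup G} (hQ : IsPGroup q Q) : Q ≤ K := by
  have hquot : IsPGroup p (G ⧸ K) :=
    IsPGroup.of_card (n := 1) (by rw [← index_eq_card, hK, pow_one])
  have hdisj := IsPGroup.disjoint_of_ne p q hpq _ _
    (hquot.to_subgroup (Q.map (QuotientGroup.mk' K))) (hQ.map (QuotientGroup.mk' K))
  rwa [disjoint_self, Subgroup.map_eq_bot_iff, QuotientGroup.ker_mk'] at hdisj

theorem IsPGroup.exists_le_normalizer_sylow [Finite G] {K : Subgroup G} [K.Normal]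
    (hK : K.index = p) (hpK : ¬ p ∣ Nat.card K) (hqK : q ∣ Nat.card K) {P : Subgroup G}
    (hP : IsPGroup p P) : ∃ Q : Sylow q G, P ≤ normalizer (Q : Subgroup G) := by
  have hpq : p ≠ q := by rintro rfl; exact hpK hqK
  let Q : Sylow q G := default
  have hFrattini := Q.normalizer_sup_eq_top' (Q.isPGroup'.le_of_index_eq_prime hpq hK)
  have hpN : p ∣ Nat.card (normalizer (Q : Set G)) := by
    rw [← hK, ← relIndex_top_right, ← hFrattini, relIndex_sup_right]
    exact relIndex_dvd_card _ _
  have hpIndex : ¬ p ∣ Nat.card (Sylow q G) := by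
    intro hpIndex
    rw [Q.card_eq_index_normalizer] at hpIndex
    have := mul_dvd_mul hpN hpIndex
    rw [card_mul_index, ← K.card_mul_index, hK] at this
    exact hpK (Nat.dvd_of_mul_dvd_mul_right (Fact.out : p.Prime).pos this)
  obtain ⟨Q₀, hQ₀⟩ := hP.nonempty_fixed_point_of_prime_not_dvd_card (Sylow q G) hpIndex
  exact ⟨Q₀, (Subgroup.sylow_mem_fixedPoints_iff P).mp hQ₀⟩

end NormalComplement

section SelfSolubilizing

variable {G : Type*} [Group G] {x : G}

theorem le_zpowers_of_mem_normalizer (hsol : solubilizer G x = zpowers x) {H : Subgroup G}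
    [Group.IsSolvable H] (hx : x ∈ normalizer (H : Set G)) : H ≤ zpowers x := fun _ hy => by
  rw [← SetLike.mem_coe, ← hsol, mem_solubilizer_comm]
  exact mem_solubilizer_of_mem_normalizer hy hx

theorem normalizer_zpowers_le (hsol : solubilizer G x = zpowers x) :
    normalizer (zpowers x : Set G) ≤ zpowers x := fun y hy => by
  rw [← SetLike.mem_coe, ← hsol]
  exact mem_solubilizer_of_mem_normalizer (mem_zpowers x) hy

variable [Finite G] {p : ℕ} [Fact p.Prime]

theorem exists_sylow_eq_zpowers (hsol : solubilizer G x = zpowers x)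
    (hP : IsPGroup p (zpowers x)) : ∃ S : Sylow p G, (S : Subgroup G) = zpowers x := by
  obtain ⟨S, hS⟩ := hP.exists_le_sylow
  have := S.isPGroup'.isNilpotent
  refine ⟨S, le_antisymm (fun s hs => ?_) hS⟩
  rw [← SetLike.mem_coe, ← hsol]
  exact mem_solubilizer_of_mem (hS (mem_zpowers x)) hs

theorem card_eq_of_solubilizer_eq_zpowers (hx : orderOf x = p)
    (hsol : solubilizer G x = zpowers x) : Nat.card G = p := by
  have hP : IsPGroup p (zpowers x) :=
    IsPGroup.of_card (n := 1) (by rw [Nat.card_zpowers, hx, pow_one])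
  obtain ⟨S, hS⟩ := exists_sylow_eq_zpowers hsol hP
  have hcent : normalizer ((S : Subgroup G) : Set G) ≤ centralizer (S : Subgroup G) := by
    rw [hS]
    exact (normalizer_zpowers_le hsol).trans (le_centralizer _)
  set K := (MonoidHom.transferSylow S hcent).ker
  have hK : K.IsComplement' S := MonoidHom.ker_transferSylow_isComplement' S hcent
  have hKbot : K = ⊥ := by
    by_contra hne
    obtain ⟨q, hq, hqK⟩ := Nat.exists_prime_and_dvd (mt card_eq_one.mp hne)
    have : Fact q.Prime := ⟨hq⟩
    have hpK : ¬ p ∣ Nat.card K := by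
      rw [← hK.index_eq_card]
      exact S.not_dvd_index
    obtain ⟨Q, hQ⟩ := hP.exists_le_normalizer_sylow
      (by rw [hK.symm.index_eq_card, hS, Nat.card_zpowers, hx]) hpK hqK
    have := Q.isPGroup'.isNilpotent
    have hQx := le_zpowers_of_mem_normalizer hsol (hQ (mem_zpowers x))
    have hqp : q ≠ p := by rintro rfl; exact hpK hqK
    exact Q.ne_bot_of_dvd_card (hqK.trans (card_subgroup_dvd_card _)) <| disjoint_self.mp <|
      IsPGroup.disjoint_of_ne q p hqp _ _ Q.isPGroup' (hP.to_le hQx)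
  rw [← hK.card_mul_card, hKbot, card_bot, one_mul, hS, Nat.card_zpowers, hx]

end SelfSolubilizing

theorem stmt6 {G : Type*} [Group G] [Finite G] (x : G) (p : ℕ) (hp : p.Prime)
    (h : Nat.card (solubilizer G x) = p) :
    Nat.card G = p := by
  have : Fact p.Prime := ⟨hp⟩
  rcases eq_or_ne x 1 with rfl | hx
  · rwa [solubilizer_one, Nat.card_univ] at h
  have hord : orderOf x = p :=
    ((hp.eq_one_or_self_of_dvd _ (h ▸ orderOf_dvd_card_solubilizer x)).resolve_left
      (mt orderOf_eq_one_iff.mp hx))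
  refine card_eq_of_solubilizer_eq_zpowers hord ?_
  refine (Set.eq_of_subset_of_ncard_le (zpowers_subset_solubilizer x) ?_).symm
  rw [← Nat.card_coe_set_eq, ← Nat.card_coe_set_eq, h, SetLike.coe_sort_coe, Nat.card_zpowers,
    hord]
end

section
/- Let G be a finite group, x ∈ G, and H a subgroup with C_G(x) ≤ H ≤ N_G(⟨x⟩). If ℓ_H is the number of orbits of H acting by conjugation on Sol_G(x), and H∖{1} is the union of the N_G(⟨x⟩)-conjugacy classes of g_1,…,g_ℓ, then |H|·ℓ_H = |Sol_G(x)| + |N_G(⟨x⟩)|·Σ_{i=1}^{ℓ} n(g_i, x), where n(g, x) := |Sol_{C_G(g)}(x)| / |N_{C_G(g)}(⟨x⟩)|. -/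
/-- The number of orbits of the conjugation action of a subgroup `S` on a set `T`. -/
noncomputable def numConjOrbits {G : Type*} [Group G] (S : Subgroup G) (T : Set G) : ℕ :=
  Nat.card {O : Set G // ∃ a ∈ T, O = {b | ∃ s ∈ S, b = s⁻¹ * a * s}}

/-- `n(g, x) = |Sol_{C_G(g)}(x)| / |N_{C_G(g)}(⟨x⟩)|` as a rational number. -/
noncomputable def nqt {G : Type*} [Group G] (g x : G) : ℚ :=
  (Nat.card ↥(solubilizer G x ∩ (Subgroup.centralizer {g} : Set G)) : ℚ) /
    (Nat.card ↥((Subgroup.normalizer (Subgroup.zpowers x : Set G)) ⊓ Subgroup.centralizer {g}) : ℚ)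

/-!
Burnside's lemma for `H` acting on `Sol_G(x)` by conjugation gives
`|H| ℓ_H = ∑_{h ∈ H} |Sol_G(x) ∩ C_G(h)|`, and `h = 1` contributes `|Sol_G(x)|`.
Conjugation by `t ∈ N = N_G(⟨x⟩)` maps `⟨x, y⟩` onto `⟨x, y^t⟩`, so it preserves `Sol_G(x)`
and the summand is constant on `N`-classes; by orbit–stabilizer the `N`-class of `g_i` has
`|N| / |N ∩ C_G(g_i)|` elements.
-/

open Subgroup MulAction

theorem MulAction.card_mul_card_orbits_of_smul_mem {M X : Type*} [Group M] [Fintype M]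
    [MulAction M X] {T : Set X} [Finite T] (hT : ∀ (m : M), ∀ a ∈ T, m • a ∈ T) :
    Nat.card M * Nat.card {O : Set X // ∃ a ∈ T, O = orbit M a} =
      ∑ m : M, Nat.card ↥(T ∩ fixedBy X m) := by
  classical
  let p : SubMulAction M X := ⟨T, fun m {a} => hT m a⟩
  have hrel (a b : p) :
      orbitRel M p a b ↔ Setoid.ker (fun a : p => orbit M (a : X)) a b :=
    SubMulAction.mem_orbit_subMul_iff.trans orbit_eq_iff.symm
  have horbits : orbitRel.Quotient M p ≃ {O : Set X // ∃ a ∈ T, O = orbit M a} :=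
    (Quotient.congrRight hrel).trans <| (Setoid.quotientKerEquivRange _).trans <|
      Equiv.subtypeEquivRight fun O => ⟨fun ⟨a, ha⟩ => ⟨a, a.2, ha.symm⟩,
        fun ⟨a, haT, ha⟩ => ⟨⟨a, haT⟩, ha.symm⟩⟩
  have hfixed (m : M) : fixedBy p m ≃ ↥(T ∩ fixedBy X m) :=
    (Equiv.subtypeEquivRight fun a => Subtype.ext_iff).trans
      (Equiv.subtypeSubtypeEquivSubtypeInter (· ∈ T) (· ∈ fixedBy X m))
  have := Fintype.ofFinite p
  have := Fintype.ofFinite (orbitRel.Quotient M p)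
  have burnside := sum_card_fixedBy_eq_card_orbits_mul_card_group M p
  simp only [← Nat.card_eq_fintype_card] at burnside
  rw [← Nat.card_congr horbits, mul_comm, ← burnside]
  exact Finset.sum_congr rfl fun m _ => Nat.card_congr (hfixed m)

namespace Subgroup

variable {G : Type*} [Group G]

/-- Not an instance: `S` already acts on `G` by left multiplication. -/
abbrev conjMulAction (S : Subgroup G) : MulAction S G :=
  MulAction.compHom G ((ConjAct.toConjAct : G ≃* ConjAct G).toMonoidHom.comp S.subtype)

theorem conjMulAction_smul (S : Subgroup G) (s : S) (b : G) :
    letI := S.conjMulAction; s • b = s * b * (s : G)⁻¹ :=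
  rfl

theorem orbit_conjMulAction (S : Subgroup G) (a : G) :
    letI := S.conjMulAction; orbit S a = {b | ∃ s ∈ S, b = s⁻¹ * a * s} := by
  let := S.conjMulAction
  ext b
  simp only [mem_orbit_iff, conjMulAction_smul, Set.mem_ofPred_eq]
  constructor
  · rintro ⟨s, rfl⟩
    exact ⟨(s : G)⁻¹, S.inv_mem s.2, by group⟩
  · rintro ⟨s, hs, rfl⟩
    exact ⟨⟨s⁻¹, S.inv_mem hs⟩, by simp⟩

theorem fixedBy_conjMulAction (S : Subgroup G) (s : S) :
    letI := S.conjMulAction; fixedBy G s = centralizer {(s : G)} := by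
  let := S.conjMulAction
  ext b
  rw [mem_fixedBy, conjMulAction_smul, mul_inv_eq_iff_eq_mul, SetLike.mem_coe,
    mem_centralizer_singleton_iff, eq_comm]

theorem stabilizer_conjMulAction (S : Subgroup G) (a : G) :
    letI := S.conjMulAction; stabilizer S a = (S ⊓ centralizer {a}).subgroupOf S := by
  let := S.conjMulAction
  ext s
  rw [mem_stabilizer_iff, conjMulAction_smul, mul_inv_eq_iff_eq_mul, mem_subgroupOf, mem_inf,
    mem_centralizer_singleton_iff]
  exact (and_iff_right s.2).symm

theorem card_conjClass_mul_card_inf_centralizer (S : Subgroup G) (a : G) :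
    Nat.card {b | ∃ s ∈ S, b = s⁻¹ * a * s} * Nat.card ↥(S ⊓ centralizer {a}) =
      Nat.card S := by
  let := S.conjMulAction
  rw [← orbit_conjMulAction, Nat.card_coe_set_eq, ← index_stabilizer,
    ← Nat.card_congr (subgroupOfEquivOfLe inf_le_left).toEquiv, ← stabilizer_conjMulAction,
    index_mul_card]

theorem card_mul_numConjOrbits (S : Subgroup G) [Fintype S] {T : Set G} [Finite T]
    (hT : ∀ s ∈ S, ∀ a ∈ T, s * a * s⁻¹ ∈ T) :
    Nat.card S * numConjOrbits S T = ∑ s : S, Nat.card ↥(T ∩ centralizer {(s : G)}) := by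
  let := S.conjMulAction
  have horbit (a : G) : {b | ∃ s ∈ S, b = s⁻¹ * a * s} = orbit S a :=
    (orbit_conjMulAction S a).symm
  simp_rw [numConjOrbits, horbit, ← fixedBy_conjMulAction]
  exact card_mul_card_orbits_of_smul_mem fun s a ha => hT s s.2 a ha

end Subgroup

section Solubilizer

variable {G : Type*} [Group G]

theorem Subgroup.closure_pair (a b : G) : closure {a, b} = zpowers a ⊔ zpowers b := by
  rw [Set.insert_eq, closure_union, zpowers_eq_closure, zpowers_eq_closure]

theorem map_conj_closure_pair {x t : G} (ht : t ∈ normalizer (zpowers x : Set G)) (y : G) :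
    (closure {x, y}).map (MulAut.conj t) = closure {x, MulAut.conj t y} := by
  rw [closure_pair, closure_pair, Subgroup.map_sup, mem_normalizer_iff_map_conj_eq.mp ht,
    MonoidHom.map_zpowers]
  rfl

theorem conj_mem_solubilizer {x t y : G} (ht : t ∈ normalizer (zpowers x : Set G))
    (hy : y ∈ solubilizer G x) : MulAut.conj t y ∈ solubilizer G x := by
  have : Group.IsSolvable (closure {x, y}) := hy
  show Group.IsSolvable (closure {x, MulAut.conj t y})
  rw [← map_conj_closure_pair ht]
  exact Group.isSolvable_of_surjective (MonoidHom.subgroupMap_surjective _ _)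

theorem conj_mem_solubilizer_iff {x t y : G} (ht : t ∈ normalizer (zpowers x : Set G)) :
    MulAut.conj t y ∈ solubilizer G x ↔ y ∈ solubilizer G x :=
  ⟨fun h => by simpa [mul_assoc] using conj_mem_solubilizer (inv_mem ht) h,
    conj_mem_solubilizer ht⟩

end Solubilizer

theorem card_inter_centralizer_conj {G : Type*} [Group G] {T : Set G} {t : G}
    (hT : ∀ b, MulAut.conj t b ∈ T ↔ b ∈ T) (a : G) :
    Nat.card ↥(T ∩ centralizer {MulAut.conj t a}) = Nat.card ↥(T ∩ centralizer {a}) :=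
  Nat.card_congr <| .symm <| (MulAut.conj t).toEquiv.subtypeEquiv fun b => by
    simp only [Set.mem_inter_iff, SetLike.mem_coe, mem_centralizer_singleton_iff,
      MulEquiv.toEquiv_eq_coe, MulEquiv.coe_toEquiv, hT, ← map_mul,
      (MulAut.conj t).injective.eq_iff]

theorem sum_subgroup_eq_add_sum_conjClasses {G M ι : Type*} [Group G] [Fintype G]
    [AddCommMonoid M] [Fintype ι] {H N : Subgroup G} [Fintype H] {g : ι → G}
    (hcover : (H : Set G) \ {1} = ⋃ i, {h | ∃ t ∈ N, h = t⁻¹ * g i * t})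
    (hdisj : ∀ i j, i ≠ j → ¬ ∃ t ∈ N, g j = t⁻¹ * g i * t)
    (f : G → M) (hf : ∀ t ∈ N, ∀ a, f (t⁻¹ * a * t) = f a) :
    ∑ h : H, f h = f 1 + ∑ i, Nat.card {h | ∃ t ∈ N, h = t⁻¹ * g i * t} • f (g i) := by
  classical
  let C (i : ι) : Finset G := {h | ∃ t ∈ N, h = t⁻¹ * g i * t}
  have hH : ({h | h ∈ H} : Finset G) = insert 1 (Finset.univ.biUnion C) := by
    ext h
    have hh := Set.ext_iff.mp hcover h
    simp only [Set.mem_sdiff, SetLike.mem_coe, Set.mem_singleton_iff, Set.mem_iUnion,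
      Set.mem_ofPred_eq] at hh
    by_cases h1 : h = 1
    · simp [h1, one_mem]
    · simp [C, h1, ← hh]
  have h1 : 1 ∉ Finset.univ.biUnion C := fun h1 => by
    obtain ⟨i, -, hi⟩ := Finset.mem_biUnion.mp h1
    have h1_mem : (1 : G) ∈ (H : Set G) \ {1} :=
      hcover ▸ Set.mem_iUnion.mpr ⟨i, (Finset.mem_filter.mp hi).2⟩
    exact h1_mem.2 rfl
  have hC : ((Finset.univ : Finset ι) : Set ι).PairwiseDisjoint C := by
    intro i _ j _ hij
    refine Finset.disjoint_left.mpr fun b hbi hbj => ?_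
    obtain ⟨t, ht, rfl⟩ := (Finset.mem_filter.mp hbi).2
    obtain ⟨s, hs, hbs⟩ := (Finset.mem_filter.mp hbj).2
    refine hdisj i j hij ⟨t * s⁻¹, mul_mem ht (inv_mem hs), ?_⟩
    rw [show g j = s * (t⁻¹ * g i * t) * s⁻¹ by rw [hbs]; group]
    group
  have hclass (i : ι) :
      ∑ h ∈ C i, f h = Nat.card {h | ∃ t ∈ N, h = t⁻¹ * g i * t} • f (g i) := by
    rw [Finset.sum_congr rfl fun h hh => ?_, Finset.sum_const, Nat.card_eq_card_toFinset,
      Set.toFinset_ofPred]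
    obtain ⟨t, ht, rfl⟩ := (Finset.mem_filter.mp hh).2
    exact hf t ht (g i)
  rw [← Finset.sum_subtype (p := (· ∈ H)) {h | h ∈ H} (fun _ => Finset.mem_filter_univ _) f,
    hH, Finset.sum_insert h1, Finset.sum_biUnion hC]
  simp only [hclass]

theorem stmt10_general {G : Type*} [Group G] [Finite G] (x : G) (H : Subgroup G)
    (hHN : H ≤ (Subgroup.normalizer (Subgroup.zpowers x : Set G)))
    (ℓ : ℕ) (g : Fin ℓ → G)
    (hcover : (H : Set G) \ {1} =
      ⋃ i, {h | ∃ t ∈ (Subgroup.normalizer (Subgroup.zpowers x : Set G)), h = t⁻¹ * g i * t})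
    (hdisj : ∀ i j, i ≠ j →
      ¬ ∃ t ∈ (Subgroup.normalizer (Subgroup.zpowers x : Set G)), g j = t⁻¹ * g i * t) :
    (Nat.card H : ℚ) * numConjOrbits H (solubilizer G x) =
      (Nat.card (solubilizer G x) : ℚ) +
        (Nat.card (Subgroup.normalizer (Subgroup.zpowers x : Set G)) : ℚ) * ∑ i, nqt (g i) x := by
  classical
  cases nonempty_fintype G
  set N := normalizer (zpowers x : Set G) with hN
  let F (a : G) : ℕ := Nat.card ↥(solubilizer G x ∩ centralizer {a})
  have hF : ∀ t ∈ N, ∀ a, F (t⁻¹ * a * t) = F a := fun t ht a => by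
    simpa only [MulAut.conj_apply, inv_inv] using
      card_inter_centralizer_conj (fun b => conj_mem_solubilizer_iff (inv_mem ht)) a
  have hF1 : F 1 = Nat.card (solubilizer G x) := by
    simp [F, centralizer_eq_top_iff_subset.mpr (Set.singleton_subset_iff.mpr (one_mem _))]
  have hnat : Nat.card H * numConjOrbits H (solubilizer G x) = Nat.card (solubilizer G x) +
      ∑ i, Nat.card {h | ∃ t ∈ N, h = t⁻¹ * g i * t} * F (g i) := by
    rw [H.card_mul_numConjOrbits fun s hs y hy => conj_mem_solubilizer (hHN hs) hy,
      sum_subgroup_eq_add_sum_conjClasses hcover hdisj F hF, hF1]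
    simp only [smul_eq_mul]
  have hclass (i : Fin ℓ) :
      (Nat.card {h | ∃ t ∈ N, h = t⁻¹ * g i * t} * F (g i) : ℚ) =
        Nat.card N * nqt (g i) x := by
    have hpos : (Nat.card ↥(N ⊓ centralizer {g i}) : ℚ) ≠ 0 := by
      exact_mod_cast Nat.card_pos.ne'
    rw [nqt, ← hN, ← card_conjClass_mul_card_inf_centralizer N (g i), Nat.cast_mul]
    field_simp
    rfl
  rw [Finset.mul_sum, ← Finset.sum_congr rfl fun i _ => hclass i]
  exact_mod_cast hnat

theorem stmt10 {G : Type*} [Group G] [Finite G] (x : G) (H : Subgroup G)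
    (hCH : Subgroup.centralizer {x} ≤ H)
    (hHN : H ≤ (Subgroup.normalizer (Subgroup.zpowers x : Set G)))
    (ℓ : ℕ) (g : Fin ℓ → G)
    (hg : ∀ i, g i ∈ H ∧ g i ≠ 1)
    (hcover : (H : Set G) \ {1} =
      ⋃ i, {h | ∃ t ∈ (Subgroup.normalizer (Subgroup.zpowers x : Set G)), h = t⁻¹ * g i * t})
    (hdisj : ∀ i j, i ≠ j →
      ¬ ∃ t ∈ (Subgroup.normalizer (Subgroup.zpowers x : Set G)), g j = t⁻¹ * g i * t) :
    (Nat.card H : ℚ) * numConjOrbits H (solubilizer G x) =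
      (Nat.card (solubilizer G x) : ℚ) +
        (Nat.card (Subgroup.normalizer (Subgroup.zpowers x : Set G)) : ℚ) * ∑ i, nqt (g i) x :=
  stmt10_general x H hHN ℓ g hcover hdisj
end

section
/- Let G = KH be a Frobenius group with abelian kernel K and complement H, and let x be a nontrivial element of K. Then the number of orbits of C_G(x) acting by conjugation on Sol_G(x) = G equals |H| + ℓ·|N_G(⟨x⟩) : K|, where ℓ + 1 is the number of orbits of N_G(⟨x⟩)/C_G(x) acting on K. -/
section

open MulAction ConjAct Subgroup

variable {G : Type*} [Group G]

abbrev Subgroup.conjAct (S : Subgroup G) : Subgroup (ConjAct G) :=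
  S.map ((toConjAct : G ≃* ConjAct G) : G →* ConjAct G)

lemma conjOrbit_eq_image_orbit (S L : Subgroup G) [L.Normal] (a : L) :
    {b | ∃ s ∈ S, b = s⁻¹ * a * s} = Subtype.val '' orbit S.conjAct a := by
  ext b
  constructor
  · rintro ⟨s, hs, rfl⟩
    refine ⟨⟨toConjAct s⁻¹, mem_map_of_mem _ (S.inv_mem hs)⟩ • a, ⟨_, rfl⟩, ?_⟩
    rw [Subgroup.smul_def, Subgroup.val_conj_smul, ConjAct.smul_def]
    simp
  · rintro ⟨_, ⟨⟨_, s, hs, rfl⟩, rfl⟩, rfl⟩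
    refine ⟨s⁻¹, S.inv_mem hs, ?_⟩
    dsimp only
    rw [Subgroup.smul_def, Subgroup.val_conj_smul, ConjAct.smul_def]
    simp

lemma numConjOrbits_eq_card_orbitRel_quotient (S L : Subgroup G) [L.Normal] :
    numConjOrbits S L = Nat.card (orbitRel.Quotient S.conjAct L) := by
  have hrange : {O : Set G | ∃ a ∈ (L : Set G), O = {b | ∃ s ∈ S, b = s⁻¹ * a * s}} =
      Set.range fun ω : orbitRel.Quotient S.conjAct L => Subtype.val '' ω.orbit := by
    ext O
    constructor
    · rintro ⟨a, ha, rfl⟩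
      exact ⟨Quotient.mk'' ⟨a, ha⟩, (conjOrbit_eq_image_orbit S L ⟨a, ha⟩).symm⟩
    · rintro ⟨ω, rfl⟩
      induction ω using Quotient.inductionOn' with | h a =>
      exact ⟨a, a.2, (conjOrbit_eq_image_orbit S L a).symm⟩
  change Nat.card ↥{O : Set G | _} = _
  rw [hrange, Nat.card_range_of_injective]
  exact (Set.image_injective.2 Subtype.val_injective).comp orbitRel.Quotient.orbit_injective

lemma card_fixedBy_subgroupMap_toConjAct (S L : Subgroup G) [L.Normal] (s : S) :
    Nat.card (fixedBy L ((toConjAct : G ≃* ConjAct G).subgroupMap S s : S.conjAct)) =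
      Nat.card ↥(L ⊓ centralizer {(s : G)}) := by
  have hfix : ∀ a : L, a ∈ fixedBy L ((toConjAct : G ≃* ConjAct G).subgroupMap S s : S.conjAct) ↔
      (a : G) ∈ centralizer {(s : G)} := fun a => by
    rw [mem_fixedBy, Subtype.ext_iff, mem_centralizer_singleton_iff]
    show (s : G) * a * (s : G)⁻¹ = a ↔ _
    rw [mul_inv_eq_iff_eq_mul, eq_comm]
  exact Nat.card_congr ((Equiv.subtypeEquivRight hfix).trans
    (Equiv.subtypeSubtypeEquivSubtypeInter (· ∈ L) (· ∈ centralizer {(s : G)})))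

lemma numConjOrbits_mul_card_eq_sum_card_centralizer [Finite G] (S L : Subgroup G) [Fintype S]
    [L.Normal] :
    numConjOrbits S L * Nat.card S = ∑ s : S, Nat.card ↥(L ⊓ centralizer {(s : G)}) := by
  classical
  let e := (toConjAct : G ≃* ConjAct G).subgroupMap S
  have := Fintype.ofEquiv S e.toEquiv
  have := Fintype.ofFinite (orbitRel.Quotient S.conjAct L)
  have : ∀ c : S.conjAct, Fintype (fixedBy L c) := fun _ => Fintype.ofFinite _
  have := sum_card_fixedBy_eq_card_orbits_mul_card_group S.conjAct L
  simp only [← Nat.card_eq_fintype_card] at this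
  rw [numConjOrbits_eq_card_orbitRel_quotient, Nat.card_congr e.toEquiv, ← this]
  symm
  exact Fintype.sum_equiv e.toEquiv (fun s : S => Nat.card ↥(L ⊓ centralizer {(s : G)}))
    (fun c => Nat.card (fixedBy L c)) fun s => (card_fixedBy_subgroupMap_toConjAct S L s).symm

lemma isSolvable_closure_pair_of_mem (L : Subgroup G) [L.Normal] [Group.IsSolvable L] {x : G}
    (hx : x ∈ L) (y : G) : Group.IsSolvable (closure {x, y}) := by
  let M := (zpowers (y : G ⧸ L)).comap (QuotientGroup.mk' L)
  have hLM : L ≤ M := fun l hl => by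
    simp [M, (QuotientGroup.eq_one_iff l).2 hl]
  have hCM : closure {x, y} ≤ M := (closure_le M).2 <| by
    rintro _ (rfl | rfl)
    · exact hLM hx
    · exact mem_zpowers _
  have : Group.IsSolvable (zpowers (y : G ⧸ L)) := Group.isSolvable_of_comm mul_comm'
  have : Group.IsSolvable M := Group.isSolvable_of_ker_le_range (inclusion hLM)
    (((QuotientGroup.mk' L).comp M.subtype).codRestrict (zpowers (y : G ⧸ L)) fun m => m.2)
    fun m hm => ⟨⟨m, (QuotientGroup.eq_one_iff _).1 (congrArg Subtype.val hm)⟩, rfl⟩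
  exact Group.isSolvable_of_isSolvable_injective (inclusion_injective hCM)

lemma solubilizer_eq_univ_of_mem (L : Subgroup G) [L.Normal] [Group.IsSolvable L] {x : G}
    (hx : x ∈ L) : solubilizer G x = Set.univ :=
  Set.eq_univ_of_forall (isSolvable_closure_pair_of_mem L hx)

section Frobenius

variable {K : Subgroup G}

lemma centralizer_singleton_eq_of_frobenius
    (hfrob : ∀ k ∈ K, k ≠ 1 → ∀ g : G, g * k = k * g → g ∈ K)
    (hab : ∀ a ∈ K, ∀ b ∈ K, a * b = b * a) {k : G} (hk : k ∈ K) (hk1 : k ≠ 1) :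
    centralizer {k} = K := by
  ext g
  rw [mem_centralizer_singleton_iff]
  exact ⟨hfrob k hk hk1 g, fun hg => hab g hg k hk⟩

lemma inf_centralizer_singleton_eq_bot_of_notMem
    (hfrob : ∀ k ∈ K, k ≠ 1 → ∀ g : G, g * k = k * g → g ∈ K) {g : G} (hg : g ∉ K) :
    K ⊓ centralizer {g} = ⊥ := by
  refine eq_bot_iff.2 fun k ⟨hk, hkg⟩ => ?_
  by_contra hk1
  exact hg (hfrob k hk hk1 g (mem_centralizer_singleton_iff.1 hkg).symm)

lemma numConjOrbits_top_add_one [Finite G] {H : Subgroup G} (hcompl : K.IsComplement' H)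
    (hfrob : ∀ k ∈ K, k ≠ 1 → ∀ g : G, g * k = k * g → g ∈ K)
    (hab : ∀ a ∈ K, ∀ b ∈ K, a * b = b * a) :
    numConjOrbits K (⊤ : Subgroup G) + 1 = Nat.card H + Nat.card K := by
  classical
  have := Fintype.ofFinite K
  have hsum := numConjOrbits_mul_card_eq_sum_card_centralizer K ⊤
  have hterm : ∀ k ∈ ({1}ᶜ : Finset K), Nat.card ↥(⊤ ⊓ centralizer {(k : G)}) = Nat.card K :=
    fun k hk => by
      rw [top_inf_eq, centralizer_singleton_eq_of_frobenius hfrob hab k.2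
        (by simpa using hk)]
  have hone : centralizer {(1 : G)} = ⊤ :=
    centralizer_eq_top_iff_subset.2 (Set.singleton_subset_iff.2 (one_mem _))
  rw [Fintype.sum_eq_add_sum_compl 1, Finset.sum_congr rfl hterm, Finset.sum_const,
    Finset.card_compl, Finset.card_singleton, smul_eq_mul, OneMemClass.coe_one, top_inf_eq,
    hone, card_top, ← hcompl.card_mul_card, ← Nat.card_eq_fintype_card] at hsum
  obtain ⟨m, hm⟩ : ∃ m, Nat.card K = m + 1 := ⟨_, (Nat.succ_pred_eq_of_pos Nat.card_pos).symm⟩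
  rw [hm, Nat.add_sub_cancel] at hsum
  rw [hm]
  refine Nat.eq_of_mul_eq_mul_right (by omega : 0 < m + 1) ?_
  linear_combination hsum

lemma card_add_relIndex_eq_numConjOrbits_mul_add_one [Finite G] [K.Normal] {N : Subgroup G}
    (hKN : K ≤ N)
    (hfrob : ∀ k ∈ K, k ≠ 1 → ∀ g : G, g * k = k * g → g ∈ K)
    (hab : ∀ a ∈ K, ∀ b ∈ K, a * b = b * a) :
    Nat.card K + K.relIndex N = numConjOrbits N K * K.relIndex N + 1 := by
  classical
  have := Fintype.ofFinite N
  have hterm : ∀ g : N, Nat.card ↥(K ⊓ centralizer {(g : G)}) =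
      if (g : G) ∈ K then Nat.card K else 1 := fun g => by
    split_ifs with hg
    · rw [inf_eq_left.2 fun k hk => mem_centralizer_singleton_iff.2 (hab k hk g hg)]
    · rw [inf_centralizer_singleton_eq_bot_of_notMem hfrob hg, card_bot]
  have hsum := numConjOrbits_mul_card_eq_sum_card_centralizer N K
  rw [Finset.sum_congr rfl fun g _ => hterm g, Finset.sum_ite, Finset.sum_const, Finset.sum_const,
    smul_eq_mul, smul_eq_mul, mul_one] at hsum
  have hcardK : Nat.card (K.subgroupOf N) = Nat.card K :=
    Nat.card_congr (subgroupOfEquivOfLe hKN).toEquiv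
  have hin : (Finset.univ.filter fun g : N => (g : G) ∈ K).card = Nat.card K := by
    rw [← Fintype.card_subtype, ← Nat.card_eq_fintype_card, ← hcardK]
    rfl
  have hsplit := Finset.card_filter_add_card_filter_not (s := Finset.univ)
    (fun g : N => (g : G) ∈ K)
  have hN : Nat.card K * K.relIndex N = Nat.card N := hcardK ▸ card_mul_index (K.subgroupOf N)
  rw [Finset.card_univ, ← Nat.card_eq_fintype_card, ← hN, hin] at hsplit
  rw [hin, ← hN] at hsum
  refine Nat.eq_of_mul_eq_mul_left (Nat.card_pos (α := K)) ?_
  linarith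

end Frobenius

end

theorem stmt19_general {G : Type*} [Group G] [Finite G] (K H : Subgroup G) [K.Normal]
    (hcompl : K.IsComplement' H)
    -- Frobenius condition: centralizers of nontrivial kernel elements lie in the kernel
    (hfrob : ∀ k ∈ K, k ≠ 1 → ∀ g : G, g * k = k * g → g ∈ K)
    -- the kernel is abelian
    (hab : ∀ a ∈ K, ∀ b ∈ K, a * b = b * a)
    (x : G) (hx : x ∈ K) (hx1 : x ≠ 1)
    (ℓ : ℕ)
    -- `ℓ + 1` is the number of orbits of the conjugation action of `N_G(⟨x⟩)` on `K`
    -- (equivalently, of `N_G(⟨x⟩)/C_G(x)` on `K`)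
    (hℓ : numConjOrbits (Subgroup.normalizer (Subgroup.zpowers x : Set G)) (K : Set G) = ℓ + 1) :
    numConjOrbits (Subgroup.centralizer {x}) (solubilizer G x) =
      Nat.card H + ℓ * K.relIndex (Subgroup.normalizer (Subgroup.zpowers x : Set G)) := by
  have : Group.IsSolvable K := Group.isSolvable_of_comm fun a b => Subtype.ext (hab a a.2 b b.2)
  have hKN : K ≤ Subgroup.normalizer (Subgroup.zpowers x : Set G) := fun k hk =>
    Subgroup.centralizer_le_normalizer _ fun h hh => hab h (Subgroup.zpowers_le.2 hx hh) k hk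
  have horbitsG := numConjOrbits_top_add_one hcompl hfrob hab
  have horbitsK := card_add_relIndex_eq_numConjOrbits_mul_add_one hKN hfrob hab
  rw [hℓ] at horbitsK
  rw [centralizer_singleton_eq_of_frobenius hfrob hab hx hx1, solubilizer_eq_univ_of_mem K hx,
    ← Subgroup.coe_top]
  linarith

theorem stmt19 {G : Type*} [Group G] [Finite G] (K H : Subgroup G) [K.Normal]
    (hcompl : K.IsComplement' H)
    (hKbot : K ≠ ⊥) (hKtop : K ≠ ⊤)
    -- Frobenius condition: centralizers of nontrivial kernel elements lie in the kernel
    (hfrob : ∀ k ∈ K, k ≠ 1 → ∀ g : G, g * k = k * g → g ∈ K)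
    -- the kernel is abelian
    (hab : ∀ a ∈ K, ∀ b ∈ K, a * b = b * a)
    (x : G) (hx : x ∈ K) (hx1 : x ≠ 1)
    (ℓ : ℕ)
    -- `ℓ + 1` is the number of orbits of the conjugation action of `N_G(⟨x⟩)` on `K`
    -- (equivalently, of `N_G(⟨x⟩)/C_G(x)` on `K`)
    (hℓ : numConjOrbits (Subgroup.normalizer (Subgroup.zpowers x : Set G)) (K : Set G) = ℓ + 1) :
    numConjOrbits (Subgroup.centralizer {x}) (solubilizer G x) =
      Nat.card H + ℓ * K.relIndex (Subgroup.normalizer (Subgroup.zpowers x : Set G)) :=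
  stmt19_general K H hcompl hfrob hab x hx hx1 ℓ hℓ
end
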